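/- In the GCGWE with S equal to the adjacency matrix of a simple undirected graph G, three homogeneous resources all available to each player, and payoffs f_n(x) = −x: every pure Nash equilibrium X that maximizes the total payoff Σ_n f_n(c_n(X)) (equivalently minimizes total congestion) satisfies: G is properly 3-colorable if and only if X assigns distinct resources to every pair of adjacent players. -/

import Mathlib

open Finset

variable {V : Type} [Fintype V] [DecidableEq V]

/-- Real adjacency matrix of a simple graph. -/
def adjMat (G : SimpleGraph V) [DecidableRel G.Adj] (m n : V) : ℝ :=
  if G.Adj m n then 1 else 0

/-- Congestion of player `n` in state `X` (spatial matrix = adjacency matrix). -/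
def cong (G : SimpleGraph V) [DecidableRel G.Adj] (X : V → Fin 3) (n : V) : ℝ :=
  ∑ m ∈ univ.filter (fun m => X m = X n), adjMat G m n

/-- A pure Nash equilibrium of the GCGWE with `S = A`, three homogeneous
resources, and payoffs `f_n(x) = -x`: no player can strictly decrease its
congestion by a unilateral switch. -/
def IsNash (G : SimpleGraph V) [DecidableRel G.Adj] (X : V → Fin 3) : Prop :=
  ∀ (n : V) (r : Fin 3), cong G X n ≤ cong G (Function.update X n r) n

lemma cong_nonneg (G : SimpleGraph V) [DecidableRel G.Adj] (X : V → Fin 3) (n : V) :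
    0 ≤ cong G X n := by
  apply Finset.sum_nonneg
  intro m _
  unfold adjMat
  split <;> norm_num

lemma cong_proper (G : SimpleGraph V) [DecidableRel G.Adj] {X : V → Fin 3}
    (h : ∀ n m : V, G.Adj n m → X n ≠ X m) (n : V) : cong G X n = 0 := by
  apply Finset.sum_eq_zero
  intro m hm
  simp only [mem_filter] at hm
  unfold adjMat
  rw [if_neg]
  intro hadj
  exact h m n hadj hm.2

/-- In the GCGWE with `S` the adjacency matrix of a simple graph `G`, three
homogeneous resources and payoffs `f_n(x) = -x`: every pure Nash equilibrium
`X` maximizing the total payoff `∑_n -c_n(X)` satisfies: `G` is properly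
3-colorable iff `X` assigns distinct resources to every pair of adjacent
players. -/
theorem stmt13 (G : SimpleGraph V) [DecidableRel G.Adj]
    (X : V → Fin 3) (hNE : IsNash G X)
    (hmax : ∀ Y : V → Fin 3, IsNash G Y →
      (∑ n, -(cong G Y n)) ≤ ∑ n, -(cong G X n)) :
    G.Colorable 3 ↔ ∀ n m : V, G.Adj n m → X n ≠ X m := by
  constructor
  · rintro ⟨C⟩
    set Y : V → Fin 3 := fun v => C v with hY
    have hprop : ∀ n m : V, G.Adj n m → Y n ≠ Y m := fun n m h => C.valid h
    have hYzero : ∀ n, cong G Y n = 0 := cong_proper G hprop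
    have hYNash : IsNash G Y := by
      intro n r
      rw [hYzero n]
      exact cong_nonneg _ _ _
    have := hmax Y hYNash
    simp only [hYzero, neg_zero, Finset.sum_const_zero] at this
    have hsum : ∑ n, cong G X n ≤ 0 := by
      have : -(∑ n, cong G X n) ≥ 0 := by rw [← Finset.sum_neg_distrib]; exact this
      linarith
    have hXzero : ∀ n ∈ (univ : Finset V), cong G X n = 0 :=
      (Finset.sum_eq_zero_iff_of_nonneg (fun n _ => cong_nonneg G X n)).mp
        (le_antisymm hsum (Finset.sum_nonneg (fun n _ => cong_nonneg G X n)))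
    intro n m hadj hXeq
    have h1 : (1 : ℝ) ≤ cong G X m := by
      have hmem : n ∈ univ.filter (fun k => X k = X m) := by
        simp [hXeq]
      calc (1 : ℝ) = adjMat G n m := by unfold adjMat; rw [if_pos hadj]
        _ ≤ cong G X m := Finset.single_le_sum
            (f := fun k => adjMat G k m)
            (fun k _ => by unfold adjMat; split <;> norm_num) hmem
    rw [hXzero m (mem_univ m)] at h1
    linarith
  · intro h
    exact ⟨⟨X, fun hadj => h _ _ hadj⟩⟩
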